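/- (Theorem 3.1, divergence-free part) For all 0 ≤ i, j ≤ n−1 with (i,j) ≠ (0,0), setting λ_{ij} = (6/h²)(τ_i²/σ_i + τ_j²/σ_j), U_{ij} = τ_j σ_i · c_i s_jᵀ ∈ ℝ^{n×(n−1)} and V_{ij} = −τ_i σ_j · s_i c_jᵀ ∈ ℝ^{(n−1)×n}, one has U_{ij} A − Bᵀ V_{ij} Bᵀ = (h²λ_{ij}/6) U_{ij} D, −B U_{ij} B + A V_{ij} = (h²λ_{ij}/6) D V_{ij}, and the discrete divergence-free constraint B U_{ij} D + D V_{ij} Bᵀ = 0. -/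

import Mathlib

open Matrix Real

/-- `τ_i = -2 sin(iπ/(2n))`. -/
noncomputable def tau (n i : ℕ) : ℝ := -2 * Real.sin ((i : ℝ) * Real.pi / (2 * n))

/-- `σ_i = 2(2 + cos(iπ/n))`. -/
noncomputable def sigma (n i : ℕ) : ℝ := 2 * (2 + Real.cos ((i : ℝ) * Real.pi / n))

/-- Stiffness matrix `A ∈ ℝ^{(n-1)×(n-1)}`. -/
def Amat (n : ℕ) : Matrix (Fin (n - 1)) (Fin (n - 1)) ℝ :=
  Matrix.of fun k l =>
    if (k : ℕ) = (l : ℕ) then 2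
    else if (k : ℕ) + 1 = (l : ℕ) ∨ (l : ℕ) + 1 = (k : ℕ) then -1 else 0

/-- Mass matrix `D ∈ ℝ^{(n-1)×(n-1)}`. -/
def Dmat (n : ℕ) : Matrix (Fin (n - 1)) (Fin (n - 1)) ℝ :=
  Matrix.of fun k l =>
    if (k : ℕ) = (l : ℕ) then 4
    else if (k : ℕ) + 1 = (l : ℕ) ∨ (l : ℕ) + 1 = (k : ℕ) then 1 else 0

/-- Discrete divergence matrix `B ∈ ℝ^{(n-1)×n}`. -/
def Bmat (n : ℕ) : Matrix (Fin (n - 1)) (Fin n) ℝ :=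
  Matrix.of fun k l =>
    if (l : ℕ) = (k : ℕ) then -1 else if (l : ℕ) = (k : ℕ) + 1 then 1 else 0

/-- The vector `s_j ∈ ℝ^{n-1}` with entries `(s_j)_k = sin(kjπ/n)` (so `s_0 = 0`). -/
noncomputable def svec (n j : ℕ) : Fin (n - 1) → ℝ :=
  fun k => Real.sin (((((k : ℕ) + 1) * j : ℕ) : ℝ) * Real.pi / n)

/-- The vector `c_j ∈ ℝ^n` with entries `(c_j)_k = ν_j cos((2k-1)jπ/(2n))`,
`ν_0 = 1/√2`, `ν_j = 1` for `1 ≤ j ≤ n-1`. -/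
noncomputable def cvec (n j : ℕ) : Fin n → ℝ :=
  fun k =>
    (if j = 0 then 1 / Real.sqrt 2 else 1) *
      Real.cos (((2 * (k : ℕ) + 1) * j : ℕ) * Real.pi / (2 * n))

lemma fin_sum_ite {m c : ℕ} (f : Fin m → ℝ) :
    (∑ l : Fin m, if (l : ℕ) = c then f l else 0) = if hc : c < m then f ⟨c, hc⟩ else 0 := by
  by_cases hc : c < m
  · rw [dif_pos hc, Finset.sum_eq_single (⟨c, hc⟩ : Fin m)]
    · simp
    · intro b _ hb
      rw [if_neg]
      intro hbc
      exact hb (Fin.ext hbc)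
    · simp
  · rw [dif_neg hc]
    apply Finset.sum_eq_zero
    intro l _
    rw [if_neg]
    omega

lemma tri_sum (n : ℕ) (hn : 2 ≤ n) (d e : ℝ) (S : ℕ → ℝ) (h0 : S 0 = 0) (hSn : S n = 0)
    (k : Fin (n - 1)) :
    (∑ l : Fin (n - 1), S ((l : ℕ) + 1) *
        (if (l : ℕ) = (k : ℕ) then d
         else if (l : ℕ) + 1 = (k : ℕ) ∨ (k : ℕ) + 1 = (l : ℕ) then e else 0)) =
      d * S ((k : ℕ) + 1) + e * S (k : ℕ) + e * S ((k : ℕ) + 2) := by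
  have key : ∀ l : Fin (n - 1),
      S ((l : ℕ) + 1) *
        (if (l : ℕ) = (k : ℕ) then d
         else if (l : ℕ) + 1 = (k : ℕ) ∨ (k : ℕ) + 1 = (l : ℕ) then e else 0) =
      (if (l : ℕ) = (k : ℕ) then S ((l : ℕ) + 1) * d else 0) +
      (if (l : ℕ) + 1 = (k : ℕ) then S ((l : ℕ) + 1) * e else 0) +
      (if (l : ℕ) = (k : ℕ) + 1 then S ((l : ℕ) + 1) * e else 0) := by
    intro l
    split_ifs <;> first | ring1 | (exfalso; omega)
  rw [Finset.sum_congr rfl (fun l _ => key l), Finset.sum_add_distrib, Finset.sum_add_distrib]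
  have hk : (k : ℕ) < n - 1 := k.isLt
  have h1 : (∑ l : Fin (n - 1), if (l : ℕ) = (k : ℕ) then S ((l : ℕ) + 1) * d else 0)
      = S ((k : ℕ) + 1) * d := by
    rw [fin_sum_ite (fun l : Fin (n-1) => S ((l : ℕ) + 1) * d), dif_pos hk]
  have h2 : (∑ l : Fin (n - 1), if (l : ℕ) + 1 = (k : ℕ) then S ((l : ℕ) + 1) * e else 0)
      = S (k : ℕ) * e := by
    rcases Nat.eq_zero_or_eq_succ_pred (k : ℕ) with hk0 | hk0
    · rw [hk0, h0, zero_mul]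
      apply Finset.sum_eq_zero
      intro l _
      rw [if_neg]
      omega
    · set k' := (k : ℕ) - 1 with hk'
      have hcong : ∀ l : Fin (n - 1),
          (if (l : ℕ) + 1 = (k : ℕ) then S ((l : ℕ) + 1) * e else 0) =
          (if (l : ℕ) = k' then S ((l : ℕ) + 1) * e else 0) := by
        intro l
        congr 1
        simp only [eq_iff_iff]
        omega
      rw [Finset.sum_congr rfl (fun l _ => hcong l),
        fin_sum_ite (fun l : Fin (n-1) => S ((l : ℕ) + 1) * e), dif_pos (by omega : k' < n - 1)]
      show S (k' + 1) * e = S (k : ℕ) * e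
      congr 2
      omega
  have h3 : (∑ l : Fin (n - 1), if (l : ℕ) = (k : ℕ) + 1 then S ((l : ℕ) + 1) * e else 0)
      = S ((k : ℕ) + 2) * e := by
    rw [fin_sum_ite (fun l : Fin (n-1) => S ((l : ℕ) + 1) * e)]
    by_cases hc : (k : ℕ) + 1 < n - 1
    · rw [dif_pos hc]
    · rw [dif_neg hc]
      have : (k : ℕ) + 2 = n := by omega
      rw [this, hSn, zero_mul]
  rw [h1, h2, h3]
  ring

lemma Amat_symm (n : ℕ) : (Amat n)ᵀ = Amat n := by
  ext k l
  simp only [Matrix.transpose_apply, Amat, Matrix.of_apply]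
  split_ifs <;> first | rfl | (exfalso; omega)

lemma Dmat_symm (n : ℕ) : (Dmat n)ᵀ = Dmat n := by
  ext k l
  simp only [Matrix.transpose_apply, Dmat, Matrix.of_apply]
  split_ifs <;> first | rfl | (exfalso; omega)

lemma svec_eq (n j : ℕ) (k : Fin (n - 1)) :
    svec n j k = Real.sin ((((k : ℕ) + 1 : ℕ) : ℝ) * (j : ℝ) * Real.pi / n) := by
  simp only [svec]
  push_cast
  ring_nf

lemma Sfun_n (n j : ℕ) (hn : 2 ≤ n) :
    Real.sin (((n : ℕ) : ℝ) * (j : ℝ) * Real.pi / n) = 0 := by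
  have hN : (n : ℝ) ≠ 0 := by positivity
  rw [show ((n : ℕ) : ℝ) * (j : ℝ) * Real.pi / n = (j : ℝ) * Real.pi by field_simp]
  exact Real.sin_nat_mul_pi j

lemma trig_AD (n j k : ℕ) (hn : 2 ≤ n) :
    Real.sin (((k : ℝ)) * (j : ℝ) * Real.pi / n) +
      Real.sin (((k : ℝ) + 2) * (j : ℝ) * Real.pi / n) =
    (2 - 2 * Real.sin ((j : ℝ) * Real.pi / (2 * n)) ^ 2 * 2) *
      Real.sin (((k : ℝ) + 1) * (j : ℝ) * Real.pi / n) := by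
  have hN : (n : ℝ) ≠ 0 := by positivity
  set x := ((k : ℝ) + 1) * (j : ℝ) * Real.pi / n with hx
  set t := (j : ℝ) * Real.pi / (2 * n) with ht
  have e1 : (k : ℝ) * (j : ℝ) * Real.pi / n = x - 2 * t := by
    rw [hx, ht]; field_simp; ring
  have e2 : ((k : ℝ) + 2) * (j : ℝ) * Real.pi / n = x + 2 * t := by
    rw [hx, ht]; field_simp; ring
  have hc : Real.cos (2 * t) = 1 - 2 * Real.sin t ^ 2 := by
    rw [Real.cos_two_mul]
    nlinarith [Real.sin_sq_add_cos_sq t]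
  rw [e1, e2, Real.sin_sub, Real.sin_add, hc]
  ring

lemma vecMul_A (n : ℕ) (hn : 2 ≤ n) (j : ℕ) :
    Matrix.vecMul (svec n j) (Amat n) = ((tau n j) ^ 2) • svec n j := by
  funext k
  have hN : (n : ℝ) ≠ 0 := by positivity
  set S : ℕ → ℝ := fun m => Real.sin ((m : ℝ) * (j : ℝ) * Real.pi / n) with hS
  have hsum : Matrix.vecMul (svec n j) (Amat n) k =
      ∑ l : Fin (n - 1), S ((l : ℕ) + 1) *
        (if (l : ℕ) = (k : ℕ) then (2:ℝ)
         else if (l : ℕ) + 1 = (k : ℕ) ∨ (k : ℕ) + 1 = (l : ℕ) then -1 else 0) := by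
    simp only [Matrix.vecMul, dotProduct, Amat, Matrix.of_apply, hS]
    apply Finset.sum_congr rfl
    intro l _
    rw [svec_eq]
    try push_cast
    try ring_nf
  rw [hsum, tri_sum n hn 2 (-1) S (by simp [hS]) (by simpa using Sfun_n n j hn) k]
  have hgoal := trig_AD n j (k : ℕ) hn
  simp only [Pi.smul_apply, smul_eq_mul, svec_eq, tau, hS]
  push_cast
  push_cast at hgoal
  nlinarith [hgoal]

lemma cos_np (n j : ℕ) (hn : 2 ≤ n) :
    Real.cos ((j : ℝ) * Real.pi / n) =
      1 - 2 * Real.sin ((j : ℝ) * Real.pi / (2 * n)) ^ 2 := by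
  have hN : (n : ℝ) ≠ 0 := by positivity
  set t := (j : ℝ) * Real.pi / (2 * n) with ht
  rw [show (j : ℝ) * Real.pi / n = 2 * t by rw [ht]; field_simp, Real.cos_two_mul]
  nlinarith [Real.sin_sq_add_cos_sq t]

lemma vecMul_D (n : ℕ) (hn : 2 ≤ n) (j : ℕ) :
    Matrix.vecMul (svec n j) (Dmat n) = (sigma n j) • svec n j := by
  funext k
  have hN : (n : ℝ) ≠ 0 := by positivity
  set S : ℕ → ℝ := fun m => Real.sin ((m : ℝ) * (j : ℝ) * Real.pi / n) with hS
  have hsum : Matrix.vecMul (svec n j) (Dmat n) k =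
      ∑ l : Fin (n - 1), S ((l : ℕ) + 1) *
        (if (l : ℕ) = (k : ℕ) then (4:ℝ)
         else if (l : ℕ) + 1 = (k : ℕ) ∨ (k : ℕ) + 1 = (l : ℕ) then 1 else 0) := by
    simp only [Matrix.vecMul, dotProduct, Dmat, Matrix.of_apply, hS]
    apply Finset.sum_congr rfl
    intro l _
    rw [svec_eq]
    try push_cast
    try ring_nf
  rw [hsum, tri_sum n hn 4 1 S (by simp [hS]) (by simpa using Sfun_n n j hn) k]
  have hgoal := trig_AD n j (k : ℕ) hn
  have hcos := cos_np n j hn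
  simp only [Pi.smul_apply, smul_eq_mul, svec_eq, sigma, hS, hcos]
  push_cast
  push_cast at hgoal
  nlinarith [hgoal]

lemma mulVec_B (n : ℕ) (hn : 2 ≤ n) (j : ℕ) :
    Matrix.mulVec (Bmat n) (cvec n j) = (tau n j) • svec n j := by
  funext k
  have hN : (n : ℝ) ≠ 0 := by positivity
  have hk1 : (k : ℕ) < n := by have := k.isLt; omega
  have hk2 : (k : ℕ) + 1 < n := by have := k.isLt; omega
  have hsum : Matrix.mulVec (Bmat n) (cvec n j) k =
      -(cvec n j ⟨(k : ℕ), hk1⟩) + cvec n j ⟨(k : ℕ) + 1, hk2⟩ := by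
    simp only [Matrix.mulVec, dotProduct, Bmat, Matrix.of_apply]
    have key : ∀ l : Fin n,
        (if (l : ℕ) = (k : ℕ) then (-1 : ℝ) else if (l : ℕ) = (k : ℕ) + 1 then 1 else 0) *
          cvec n j l =
        (if (l : ℕ) = (k : ℕ) then -(cvec n j l) else 0) +
        (if (l : ℕ) = (k : ℕ) + 1 then cvec n j l else 0) := by
      intro l
      split_ifs <;> first | ring1 | (exfalso; omega)
    rw [Finset.sum_congr rfl (fun l _ => key l), Finset.sum_add_distrib,
      fin_sum_ite (fun l : Fin n => -(cvec n j l)), fin_sum_ite (fun l : Fin n => cvec n j l),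
      dif_pos hk1, dif_pos hk2]
  rw [hsum]
  by_cases hj : j = 0
  · subst hj
    simp [cvec, tau]
  · simp only [cvec, if_neg hj, one_mul, Pi.smul_apply, smul_eq_mul, svec_eq, tau]
    push_cast
    set x := ((k : ℝ) + 1) * (j : ℝ) * Real.pi / n with hx
    set t := (j : ℝ) * Real.pi / (2 * n) with ht
    have e1 : (2 * (k : ℝ) + 1) * (j : ℝ) * Real.pi / (2 * n) = x - t := by
      rw [hx, ht]; field_simp; ring
    have e2 : (2 * ((k : ℝ) + 1) + 1) * (j : ℝ) * Real.pi / (2 * n) = x + t := by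
      rw [hx, ht]; field_simp
    rw [e1, e2, Real.cos_sub, Real.cos_add]
    ring

lemma vecMul_B (n : ℕ) (hn : 2 ≤ n) (j : ℕ) :
    Matrix.vecMul (svec n j) (Bmat n) = (tau n j) • cvec n j := by
  funext l
  have hN : (n : ℝ) ≠ 0 := by positivity
  set S : ℕ → ℝ := fun m => Real.sin ((m : ℝ) * (j : ℝ) * Real.pi / n) with hS
  have hSn : S n = 0 := by simpa [hS] using Sfun_n n j hn
  have hsum : Matrix.vecMul (svec n j) (Bmat n) l = S (l : ℕ) - S ((l : ℕ) + 1) := by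
    simp only [Matrix.vecMul, dotProduct, Bmat, Matrix.of_apply]
    have key : ∀ k : Fin (n - 1),
        svec n j k * (if (l : ℕ) = (k : ℕ) then (-1 : ℝ)
          else if (l : ℕ) = (k : ℕ) + 1 then 1 else 0) =
        (if (k : ℕ) = (l : ℕ) then -(S ((k : ℕ) + 1)) else 0) +
        (if (k : ℕ) + 1 = (l : ℕ) then S ((k : ℕ) + 1) else 0) := by
      intro k
      rw [svec_eq]
      have : Real.sin ((((k : ℕ) + 1 : ℕ) : ℝ) * (j : ℝ) * Real.pi / n) = S ((k : ℕ) + 1) := by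
        simp [hS]
      rw [this]
      split_ifs <;> first | ring1 | (exfalso; omega)
    rw [Finset.sum_congr rfl (fun k _ => key k), Finset.sum_add_distrib]
    have h1 : (∑ k : Fin (n - 1), if (k : ℕ) = (l : ℕ) then -(S ((k : ℕ) + 1)) else 0)
        = -(S ((l : ℕ) + 1)) := by
      rw [fin_sum_ite (fun k : Fin (n - 1) => -(S ((k : ℕ) + 1)))]
      by_cases hc : (l : ℕ) < n - 1
      · rw [dif_pos hc]
      · rw [dif_neg hc]
        have : (l : ℕ) + 1 = n := by have := l.isLt; omega
        rw [this, hSn, neg_zero]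
    have h2 : (∑ k : Fin (n - 1), if (k : ℕ) + 1 = (l : ℕ) then S ((k : ℕ) + 1) else 0)
        = S (l : ℕ) := by
      rcases Nat.eq_zero_or_eq_succ_pred (l : ℕ) with hl0 | hl0
      · rw [hl0]
        have : S 0 = 0 := by simp [hS]
        rw [this]
        apply Finset.sum_eq_zero
        intro k _
        rw [if_neg]
        omega
      · set l' := (l : ℕ) - 1 with hl'
        have hcong : ∀ k : Fin (n - 1),
            (if (k : ℕ) + 1 = (l : ℕ) then S ((k : ℕ) + 1) else 0) =
            (if (k : ℕ) = l' then S ((k : ℕ) + 1) else 0) := by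
          intro k
          congr 1
          simp only [eq_iff_iff]
          omega
        have hl'lt : l' < n - 1 := by have := l.isLt; omega
        rw [Finset.sum_congr rfl (fun k _ => hcong k),
          fin_sum_ite (fun k : Fin (n - 1) => S ((k : ℕ) + 1)), dif_pos hl'lt]
        show S (l' + 1) = S (l : ℕ)
        congr 1
        omega
    rw [h1, h2]
    ring
  rw [hsum]
  by_cases hj : j = 0
  · subst hj
    simp [hS, tau]
  · simp only [cvec, if_neg hj, one_mul, Pi.smul_apply, smul_eq_mul, tau, hS]
    push_cast
    set y := (2 * (l : ℝ) + 1) * (j : ℝ) * Real.pi / (2 * n) with hy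
    set t := (j : ℝ) * Real.pi / (2 * n) with ht
    have e1 : (l : ℝ) * (j : ℝ) * Real.pi / n = y - t := by
      rw [hy, ht]; field_simp; ring
    have e2 : ((l : ℝ) + 1) * (j : ℝ) * Real.pi / n = y + t := by
      rw [hy, ht]; field_simp; ring
    rw [e1, e2, Real.sin_sub, Real.sin_add]
    ring
lemma vmv_mul {p q r : Type*} [Fintype q] (u : p → ℝ) (v : q → ℝ) (M : Matrix q r ℝ) :
    Matrix.vecMulVec u v * M = Matrix.vecMulVec u (Matrix.vecMul v M) := by
  ext k l
  simp [Matrix.mul_apply, Matrix.vecMulVec_apply, Matrix.vecMul, dotProduct,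
    Finset.mul_sum, mul_assoc]

lemma mul_vmv {p q r : Type*} [Fintype q] (M : Matrix p q ℝ) (u : q → ℝ) (v : r → ℝ) :
    M * Matrix.vecMulVec u v = Matrix.vecMulVec (M.mulVec u) v := by
  ext k l
  simp [Matrix.mul_apply, Matrix.vecMulVec_apply, Matrix.mulVec, dotProduct,
    Finset.sum_mul, mul_assoc]

lemma vmv_smul_left {p q : Type*} (a : ℝ) (u : p → ℝ) (v : q → ℝ) :
    Matrix.vecMulVec (a • u) v = a • Matrix.vecMulVec u v := by
  ext k l
  simp [Matrix.vecMulVec_apply, mul_assoc]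

lemma vmv_smul_right {p q : Type*} (a : ℝ) (u : p → ℝ) (v : q → ℝ) :
    Matrix.vecMulVec u (a • v) = a • Matrix.vecMulVec u v := by
  ext k l
  simp [Matrix.vecMulVec_apply]
  ring

/-- Theorem 3.1, divergence-free part: for `0 ≤ i, j ≤ n-1` with `(i,j) ≠ (0,0)`,
the pair `(U_{ij}, V_{ij}) = (τ_j σ_i · c_i s_jᵀ, -τ_i σ_j · s_i c_jᵀ)` is an
eigen-solution with eigenvalue `λ_{ij} = (6/h²)(τ_i²/σ_i + τ_j²/σ_j)` and satisfies
the discrete divergence-free constraint. -/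
theorem stmt7 (n : ℕ) (hn : 2 ≤ n) (h : ℝ) (hh : h = 1 / n)
    (i j : Fin n) (hij : ¬((i : ℕ) = 0 ∧ (j : ℕ) = 0))
    (lam : ℝ)
    (hlam : lam = 6 / h ^ 2 * ((tau n i) ^ 2 / sigma n i + (tau n j) ^ 2 / sigma n j))
    (U : Matrix (Fin n) (Fin (n - 1)) ℝ)
    (hU : U = (tau n j * sigma n i) • Matrix.vecMulVec (cvec n i) (svec n j))
    (V : Matrix (Fin (n - 1)) (Fin n) ℝ)
    (hV : V = (-(tau n i * sigma n j)) • Matrix.vecMulVec (svec n i) (cvec n j)) :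
    U * Amat n - (Bmat n)ᵀ * V * (Bmat n)ᵀ = (h ^ 2 * lam / 6) • (U * Dmat n) ∧
    -(Bmat n * U * Bmat n) + Amat n * V = (h ^ 2 * lam / 6) • (Dmat n * V) ∧
    Bmat n * U * Dmat n + Dmat n * V * (Bmat n)ᵀ = 0 := by
  have hN : (n : ℝ) ≠ 0 := by positivity
  have hh0 : h ≠ 0 := by rw [hh]; positivity
  have hσ : ∀ m : ℕ, sigma n m ≠ 0 := by
    intro m
    have := Real.neg_one_le_cos ((m : ℝ) * Real.pi / n)
    simp only [sigma]
    nlinarith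
  have hc : h ^ 2 * lam / 6 = (tau n i) ^ 2 / sigma n i + (tau n j) ^ 2 / sigma n j := by
    rw [hlam]; field_simp
  have hmvA : ∀ m : ℕ, Matrix.mulVec (Amat n) (svec n m) = ((tau n m) ^ 2) • svec n m := by
    intro m; rw [← Amat_symm, Matrix.mulVec_transpose, vecMul_A n hn]
  have hmvD : ∀ m : ℕ, Matrix.mulVec (Dmat n) (svec n m) = (sigma n m) • svec n m := by
    intro m; rw [← Dmat_symm, Matrix.mulVec_transpose, vecMul_D n hn]
  have hBT1 : ∀ m : ℕ, Matrix.mulVec (Bmat n)ᵀ (svec n m) = (tau n m) • cvec n m := by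
    intro m; rw [Matrix.mulVec_transpose, vecMul_B n hn]
  have hBT2 : ∀ m : ℕ, Matrix.vecMul (cvec n m) (Bmat n)ᵀ = (tau n m) • svec n m := by
    intro m; rw [Matrix.vecMul_transpose, mulVec_B n hn]
  subst hU hV
  refine ⟨?_, ?_, ?_⟩
  · simp only [Matrix.smul_mul, Matrix.mul_smul, vmv_mul, mul_vmv, vecMul_A n hn,
      vecMul_D n hn, hBT1, hBT2, vmv_smul_left, vmv_smul_right, smul_smul]
    rw [← sub_smul]
    congr 1
    rw [hc]
    field_simp [hσ (i : ℕ), hσ (j : ℕ)]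
    ring
  · simp only [Matrix.smul_mul, Matrix.mul_smul, vmv_mul, mul_vmv, hmvA, hmvD,
      vecMul_B n hn, mulVec_B n hn, hBT1, hBT2, vmv_smul_left, vmv_smul_right, smul_smul]
    rw [← neg_smul, ← add_smul]
    congr 1
    rw [hc]
    field_simp [hσ (i : ℕ), hσ (j : ℕ)]
    ring
  · simp only [Matrix.smul_mul, Matrix.mul_smul, vmv_mul, mul_vmv, vecMul_D n hn, hmvD,
      vecMul_B n hn, mulVec_B n hn, hBT1, hBT2, vmv_smul_left, vmv_smul_right, smul_smul]
    rw [← add_smul]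
    rw [show tau n ↑j * sigma n ↑i * tau n ↑i * sigma n ↑j +
      -(tau n ↑i * sigma n ↑j) * sigma n ↑i * tau n ↑j = 0 by ring, zero_smul]
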